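/- Let n ≥ 1 and ϖ ≥ 1 be integers and s ∈ ℝⁿ. Let a ∈ S_ϖ, set m = P_{≥|s|}(a), and assume b := P_ϖ(m − a) ≠ 0. Put λ = ‖m − a‖₂² / ‖b‖₂² and a' = a + λ·b. Then for every x ∈ S_{≥|s|} ∩ S_ϖ: ‖x − m‖₂² ≥ ‖x − a'‖₂² + ‖a' − m‖₂². -/

import Mathlib

open scoped BigOperators

noncomputable section

/-- Low-frequency index set `K_ω ⊆ {0,…,n−1}`. -/
def Kset (n ω : ℕ) : Set (Fin n) := {k | (k : ℕ) ≤ ω - 1 ∨ n - ω + 1 ≤ (k : ℕ)}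

/-- The set of ω-bandlimited real vectors `S_ω`. -/
def Sband (n ω : ℕ) : Set (EuclideanSpace ℝ (Fin n)) :=
  {x | ∀ k : Fin n, k ∉ Kset n ω →
    ∑ j : Fin n, (x j : ℂ) *
      Complex.exp (-(2 * (Real.pi : ℂ) * Complex.I * ((j : ℕ) : ℂ) * ((k : ℕ) : ℂ)) / (n : ℂ)) = 0}

/-- The constraint set `S_{≥|s|}`. -/
def Sgeq (n : ℕ) (s : EuclideanSpace ℝ (Fin n)) : Set (EuclideanSpace ℝ (Fin n)) :=
  {x | ∀ j, |s j| ≤ x j}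

/-- The metric projection onto `S_{≥|s|}`: componentwise `max(z_j, |s_j|)`. -/
def Pgeq (n : ℕ) (s z : EuclideanSpace ℝ (Fin n)) : EuclideanSpace ℝ (Fin n) :=
  (WithLp.equiv 2 (Fin n → ℝ)).symm (fun j => max (z j) |s j|)

/-- The rectangular low-pass filter `P_ϖ` (the orthogonal projection onto `S_ϖ`):
`(P_ϖ z)_j = (1/n)·Σ_{k∈K_ϖ} Σ_{l} z_l·cos(2πk(j−l)/n)`. -/
def Pband (n ϖ : ℕ) (z : EuclideanSpace ℝ (Fin n)) : EuclideanSpace ℝ (Fin n) :=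
  (WithLp.equiv 2 (Fin n → ℝ)).symm (fun j =>
    (1 / (n : ℝ)) *
      ∑ k ∈ Finset.univ.filter (fun k : Fin n => (k : ℕ) ≤ ϖ - 1 ∨ n - ϖ + 1 ≤ (k : ℕ)),
        ∑ l : Fin n, z l * Real.cos (2 * Real.pi * (k : ℕ) * (((j : ℕ) : ℝ) - ((l : ℕ) : ℝ)) / (n : ℝ)))

/-!
`P_ϖ` is the orthogonal projection onto the subspace `S_ϖ` (orthogonality of the discrete
cosines) and `P_{≥|s|}` is the metric projection onto the convex set `S_{≥|s|}`. Hence for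
`x ∈ S_{≥|s|} ∩ S_ϖ` we get `⟪x - a, b⟫ = ⟪x - a, m - a⟫`, `‖b‖² = ⟪b, m - a⟫` and
`⟪x - m, m - a⟫ ≥ 0`. These give `⟪x - a', a' - m⟫ = (λ - 1) ⟪x - m, m - a⟫ ≥ 0`, since
`λ ≥ 1` by `‖b‖ ≤ ‖m - a‖`, and expanding `‖x - m‖² = ‖(x - a') + (a' - m)‖²` finishes.
-/

open Finset
open scoped RealInnerProductSpace

section ExtrapolatedStep

variable {E : Type*} [NormedAddCommGroup E] [InnerProductSpace ℝ E]

theorem norm_le_norm_of_inner_self_eq_inner {b v : E} (h : ⟪b, b⟫ = ⟪b, v⟫) : ‖b‖ ≤ ‖v‖ := by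
  have hle : ‖b‖ ^ 2 ≤ ‖b‖ * ‖v‖ := by
    rw [← real_inner_self_eq_norm_sq, h]
    exact real_inner_le_norm b v
  nlinarith [norm_nonneg b, norm_nonneg v]

theorem norm_sub_sq_add_norm_sub_sq_le_of_extrapolation {a m b x : E} {lam : ℝ}
    (hxa : ⟪x - a, b⟫ = ⟪x - a, m - a⟫) (hbb : ⟪b, b⟫ = ⟪b, m - a⟫)
    (hxm : 0 ≤ ⟪x - m, m - a⟫) (hb : b ≠ 0) (hlam : lam * ‖b‖ ^ 2 = ‖m - a‖ ^ 2) :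
    ‖x - (a + lam • b)‖ ^ 2 + ‖a + lam • b - m‖ ^ 2 ≤ ‖x - m‖ ^ 2 := by
  have hlam_one : 1 ≤ lam := by
    have hb_pos : 0 < ‖b‖ ^ 2 := by positivity
    have := pow_le_pow_left₀ (norm_nonneg b) (norm_le_norm_of_inner_self_eq_inner hbb) 2
    nlinarith
  have key : ⟪x - (a + lam • b), a + lam • b - m⟫ = (lam - 1) * ⟪x - m, m - a⟫ := by
    rw [show x - (a + lam • b) = (x - a) - lam • b by abel,
      show a + lam • b - m = lam • b - (m - a) by abel, show x - m = (x - a) - (m - a) by abel]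
    generalize x - a = u at hxa ⊢
    generalize m - a = v at hxa hbb hlam ⊢
    simp only [inner_sub_left, inner_sub_right, real_inner_smul_left, real_inner_smul_right,
      real_inner_self_eq_norm_sq, norm_smul, Real.norm_eq_abs, mul_pow, sq_abs] at hbb ⊢
    linear_combination lam * hxa - lam * hbb + (1 - lam) * hlam
  have hsplit := norm_add_sq_real (x - (a + lam • b)) (a + lam • b - m)
  rw [show x - (a + lam • b) + (a + lam • b - m) = x - m by abel, key] at hsplit
  nlinarith [mul_nonneg (sub_nonneg.mpr hlam_one) hxm]

end ExtrapolatedStep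

section Coordinates

variable {n : ℕ}

theorem inner_eq_sum_mul (x y : EuclideanSpace ℝ (Fin n)) : ⟪x, y⟫ = ∑ j, x j * y j := by
  simp only [PiLp.inner_apply, RCLike.inner_apply, conj_trivial, mul_comm]

theorem inner_sub_Pgeq_sub_nonneg {s x : EuclideanSpace ℝ (Fin n)} (hx : x ∈ Sgeq n s)
    (a : EuclideanSpace ℝ (Fin n)) : 0 ≤ ⟪x - Pgeq n s a, Pgeq n s a - a⟫ := by
  rw [inner_eq_sum_mul]
  refine sum_nonneg fun j _ => ?_
  change 0 ≤ (x j - max (a j) |s j|) * (max (a j) |s j| - a j)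
  have := hx j
  rcases le_total |s j| (a j) with h | h
  · simp [max_eq_left h]
  · rw [max_eq_right h]
    exact mul_nonneg (by linarith) (by linarith)

end Coordinates

section Fourier

open Complex

variable {n : ℕ}

theorem sum_cexp_two_pi_I_mul_div (hn : 0 < n) (d : ℤ) :
    ∑ j : Fin n, exp (2 * Real.pi * I * d * (j : ℕ) / n) = if (n : ℤ) ∣ d then (n : ℂ) else 0 := by
  set ζ := exp (2 * Real.pi * I / n) with hζ_def
  have hζ : IsPrimitiveRoot ζ n := isPrimitiveRoot_exp n hn.ne'
  have hpow : ∀ j : ℕ, exp (2 * Real.pi * I * d * j / n) = (ζ ^ d) ^ j := by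
    intro j
    rw [hζ_def, ← exp_int_mul, ← exp_nat_mul]
    ring_nf
  simp only [hpow]
  rw [Fin.sum_univ_eq_sum_range ((ζ ^ d) ^ ·)]
  split_ifs with hd
  · simp [(hζ.zpow_eq_one_iff_dvd d).mpr hd]
  · have hz : ζ ^ d ≠ 1 := fun h => hd ((hζ.zpow_eq_one_iff_dvd d).mp h)
    have hzn : (ζ ^ d) ^ n = 1 := by
      rw [← zpow_natCast, ← zpow_mul, mul_comm d, zpow_mul, zpow_natCast, hζ.pow_eq_one, one_zpow]
    rw [geom_sum_eq hz, hzn, sub_self, zero_div]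

theorem sum_cos_two_pi_mul_div (hn : 0 < n) (d : ℤ) :
    ∑ j : Fin n, Real.cos (2 * Real.pi * d * (j : ℕ) / n) = if (n : ℤ) ∣ d then (n : ℝ) else 0 := by
  have h := congrArg re (sum_cexp_two_pi_I_mul_div hn d)
  rw [re_sum] at h
  convert h using 2 with j
  · rw [show 2 * Real.pi * I * d * (j : ℕ) / n = ((2 * Real.pi * d * (j : ℕ) / n : ℝ) : ℂ) * I by
      push_cast; ring, exp_ofReal_mul_I_re]
  · split_ifs <;> simp

theorem eq_of_natCast_dvd_val_sub {j l : Fin n} (h : (n : ℤ) ∣ (j : ℕ) - (l : ℕ)) : j = l := by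
  have := Int.eq_zero_of_abs_lt_dvd h (by rw [abs_lt]; omega)
  exact Fin.ext (by omega)

theorem val_add_eq_zero_or_eq_of_natCast_dvd {k l : Fin n} (h : (n : ℤ) ∣ (k : ℕ) + (l : ℕ)) :
    (k : ℕ) + l = 0 ∨ (k : ℕ) + l = n := by
  by_contra! hne
  have := Int.eq_zero_of_abs_lt_dvd (dvd_sub h dvd_rfl) (by rw [abs_lt]; omega)
  omega

theorem not_dvd_of_mem_Kset_of_not_mem {ϖ : ℕ} {k k' : Fin n} (hk : k ∈ Kset n ϖ)
    (hk' : k' ∉ Kset n ϖ) :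
    ¬ (n : ℤ) ∣ (k : ℕ) - (k' : ℕ) ∧ ¬ (n : ℤ) ∣ (k : ℕ) + (k' : ℕ) := by
  simp only [Kset, Set.mem_ofPred_eq, not_or, not_le] at hk hk'
  refine ⟨fun h => ?_, fun h => ?_⟩
  · obtain rfl := eq_of_natCast_dvd_val_sub h
    omega
  · have := k'.isLt
    rcases val_add_eq_zero_or_eq_of_natCast_dvd h with h | h <;> omega

def cosKernel (n : ℕ) (k j l : Fin n) : ℝ :=
  Real.cos (2 * Real.pi * (k : ℕ) * (((j : ℕ) : ℝ) - ((l : ℕ) : ℝ)) / (n : ℝ))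

def Kfinset (n ϖ : ℕ) : Finset (Fin n) :=
  Finset.univ.filter (fun k : Fin n => (k : ℕ) ≤ ϖ - 1 ∨ n - ϖ + 1 ≤ (k : ℕ))

theorem mem_Kfinset {ϖ : ℕ} {k : Fin n} : k ∈ Kfinset n ϖ ↔ k ∈ Kset n ϖ := by
  simp [Kfinset, Kset]

theorem Pband_apply (ϖ : ℕ) (z : EuclideanSpace ℝ (Fin n)) (j : Fin n) :
    Pband n ϖ z j = 1 / (n : ℝ) * ∑ k ∈ Kfinset n ϖ, ∑ l, z l * cosKernel n k j l :=
  rfl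

theorem sum_cosKernel (hn : 0 < n) (j l : Fin n) :
    ∑ k, cosKernel n k j l = if j = l then (n : ℝ) else 0 := by
  have harg : ∀ k : Fin n, cosKernel n k j l
      = Real.cos (2 * Real.pi * ((((j : ℕ) : ℤ) - (l : ℕ) : ℤ) : ℝ) * (k : ℕ) / n) := by
    intro k
    rw [cosKernel]
    push_cast
    ring_nf
  simp only [harg, sum_cos_two_pi_mul_div hn]
  by_cases hjl : j = l
  · simp [hjl]
  · rw [if_neg fun h => hjl (eq_of_natCast_dvd_val_sub (by exact_mod_cast h)), if_neg hjl]

theorem sum_sum_sum_mul_cosKernel (hn : 0 < n) (w z : EuclideanSpace ℝ (Fin n)) :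
    ∑ k, ∑ j, ∑ l, w j * z l * cosKernel n k j l = n * ⟪w, z⟫ := by
  rw [sum_comm, inner_eq_sum_mul, mul_sum]
  refine sum_congr rfl fun j _ => ?_
  simp only [sum_comm (γ := Fin n) (s := univ) (t := univ) (f := fun k l => w j * z l * _),
    ← mul_sum, sum_cosKernel hn, mul_ite, mul_zero, sum_ite_eq, mem_univ, if_true]
  ring

def cosCoeff (n : ℕ) (w : EuclideanSpace ℝ (Fin n)) (k : Fin n) : ℝ :=
  ∑ j : Fin n, w j * Real.cos (2 * Real.pi * (k : ℕ) * (j : ℕ) / n)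

def sinCoeff (n : ℕ) (w : EuclideanSpace ℝ (Fin n)) (k : Fin n) : ℝ :=
  ∑ j : Fin n, w j * Real.sin (2 * Real.pi * (k : ℕ) * (j : ℕ) / n)

theorem sum_sum_mul_cosKernel (w z : EuclideanSpace ℝ (Fin n)) (k : Fin n) :
    ∑ j, ∑ l, w j * z l * cosKernel n k j l
      = cosCoeff n w k * cosCoeff n z k + sinCoeff n w k * sinCoeff n z k := by
  simp only [cosCoeff, sinCoeff, sum_mul_sum, ← sum_add_distrib]
  refine sum_congr rfl fun j _ => sum_congr rfl fun l _ => ?_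
  rw [cosKernel, show 2 * Real.pi * (k : ℕ) * (((j : ℕ) : ℝ) - ((l : ℕ) : ℝ)) / n
      = 2 * Real.pi * (k : ℕ) * (j : ℕ) / n - 2 * Real.pi * (k : ℕ) * (l : ℕ) / n by ring,
    Real.cos_sub]
  ring

theorem sum_mul_cexp_eq_cosCoeff_sub_sinCoeff (x : EuclideanSpace ℝ (Fin n)) (k : Fin n) :
    ∑ j : Fin n, (x j : ℂ) *
      exp (-(2 * (Real.pi : ℂ) * I * ((j : ℕ) : ℂ) * ((k : ℕ) : ℂ)) / (n : ℂ))
      = cosCoeff n x k - sinCoeff n x k * I := by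
  simp only [cosCoeff, sinCoeff, ofReal_sum, sum_mul, ← sum_sub_distrib]
  refine sum_congr rfl fun j _ => ?_
  rw [show -(2 * (Real.pi : ℂ) * I * ((j : ℕ) : ℂ) * ((k : ℕ) : ℂ)) / (n : ℂ)
      = ((-(2 * Real.pi * (k : ℕ) * (j : ℕ) / n) : ℝ) : ℂ) * I by push_cast; ring,
    exp_mul_I, ← ofReal_cos, ← ofReal_sin, Real.cos_neg, Real.sin_neg]
  push_cast
  ring

theorem cosCoeff_eq_zero_and_sinCoeff_eq_zero {ϖ : ℕ} {x : EuclideanSpace ℝ (Fin n)}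
    (hx : x ∈ Sband n ϖ) {k : Fin n} (hk : k ∉ Kset n ϖ) :
    cosCoeff n x k = 0 ∧ sinCoeff n x k = 0 := by
  have h := hx k hk
  rw [sum_mul_cexp_eq_cosCoeff_sub_sinCoeff, Complex.ext_iff] at h
  simpa using h

theorem inner_Pband (ϖ : ℕ) (w z : EuclideanSpace ℝ (Fin n)) :
    ⟪w, Pband n ϖ z⟫ = 1 / (n : ℝ) * ∑ k ∈ Kfinset n ϖ, ∑ j, ∑ l, w j * z l * cosKernel n k j l := by
  simp only [inner_eq_sum_mul, Pband_apply, mul_sum]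
  rw [sum_comm]
  refine sum_congr rfl fun k _ => sum_congr rfl fun j _ => sum_congr rfl fun l _ => ?_
  ring

theorem inner_Pband_of_mem_Sband (hn : 0 < n) {ϖ : ℕ} {w : EuclideanSpace ℝ (Fin n)}
    (hw : w ∈ Sband n ϖ) (z : EuclideanSpace ℝ (Fin n)) : ⟪w, Pband n ϖ z⟫ = ⟪w, z⟫ := by
  have hn' : (n : ℝ) ≠ 0 := Nat.cast_ne_zero.mpr hn.ne'
  rw [inner_Pband, sum_subset (subset_univ _), sum_sum_sum_mul_cosKernel hn]
  · field_simp
  · intro k _ hk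
    obtain ⟨hc, hs⟩ := cosCoeff_eq_zero_and_sinCoeff_eq_zero hw (mt mem_Kfinset.mpr hk)
    simp [sum_sum_mul_cosKernel, hc, hs]

theorem sum_cosKernel_mul_cexp_eq_zero (hn : 0 < n) {k k' : Fin n}
    (hsub : ¬ (n : ℤ) ∣ (k : ℕ) - (k' : ℕ)) (hadd : ¬ (n : ℤ) ∣ (k : ℕ) + (k' : ℕ)) (l : Fin n) :
    ∑ j : Fin n, (cosKernel n k j l : ℂ) *
      exp (-(2 * (Real.pi : ℂ) * I * ((j : ℕ) : ℂ) * ((k' : ℕ) : ℂ)) / (n : ℂ)) = 0 := by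
  -- `cos` contributes the frequencies `k - k'` and `-(k + k')`, neither a multiple of `n`.
  have hterm : ∀ j : Fin n, (cosKernel n k j l : ℂ) *
      exp (-(2 * (Real.pi : ℂ) * I * ((j : ℕ) : ℂ) * ((k' : ℕ) : ℂ)) / (n : ℂ))
      = (exp (2 * Real.pi * I * ((k : ℕ) - (k' : ℕ) : ℤ) * (j : ℕ) / n)
            * exp (-(2 * Real.pi * I * (k : ℕ) * (l : ℕ)) / n)
          + exp (2 * Real.pi * I * (-((k : ℕ) + (k' : ℕ)) : ℤ) * (j : ℕ) / n)
            * exp (2 * Real.pi * I * (k : ℕ) * (l : ℕ) / n)) / 2 := by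
    intro j
    rw [cosKernel, ofReal_cos, cos, div_mul_eq_mul_div, add_mul, ← exp_add, ← exp_add,
      ← exp_add, ← exp_add]
    congr 3 <;> push_cast <;> ring
  rw [sum_congr rfl fun j _ => hterm j, ← sum_div, sum_add_distrib, ← sum_mul, ← sum_mul,
    sum_cexp_two_pi_I_mul_div hn, sum_cexp_two_pi_I_mul_div hn, if_neg (by exact_mod_cast hsub),
    if_neg (by rw [dvd_neg]; exact_mod_cast hadd)]
  simp

theorem Pband_mem_Sband (hn : 0 < n) (ϖ : ℕ) (z : EuclideanSpace ℝ (Fin n)) :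
    Pband n ϖ z ∈ Sband n ϖ := by
  intro k' hk'
  calc ∑ j : Fin n, (Pband n ϖ z j : ℂ) *
        exp (-(2 * (Real.pi : ℂ) * I * ((j : ℕ) : ℂ) * ((k' : ℕ) : ℂ)) / (n : ℂ))
      = 1 / (n : ℂ) * ∑ k ∈ Kfinset n ϖ, ∑ l, (z l : ℂ) * ∑ j : Fin n, (cosKernel n k j l : ℂ) *
          exp (-(2 * (Real.pi : ℂ) * I * ((j : ℕ) : ℂ) * ((k' : ℕ) : ℂ)) / (n : ℂ)) := by
        simp only [Pband_apply, ofReal_mul, ofReal_sum, mul_sum, sum_mul]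
        rw [sum_comm]
        refine sum_congr rfl fun k _ => ?_
        rw [sum_comm]
        refine sum_congr rfl fun l _ => sum_congr rfl fun j _ => ?_
        push_cast
        ring
    _ = 0 := by
        refine mul_eq_zero_of_right _ (sum_eq_zero fun k hk => sum_eq_zero fun l _ => ?_)
        obtain ⟨hsub, hadd⟩ := not_dvd_of_mem_Kset_of_not_mem (mem_Kfinset.mp hk) hk'
        rw [sum_cosKernel_mul_cexp_eq_zero hn hsub hadd, mul_zero]

theorem sub_mem_Sband {ϖ : ℕ} {x y : EuclideanSpace ℝ (Fin n)} (hx : x ∈ Sband n ϖ)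
    (hy : y ∈ Sband n ϖ) : x - y ∈ Sband n ϖ := by
  intro k hk
  simp only [PiLp.sub_apply, ofReal_sub, sub_mul, sum_sub_distrib, hx k hk, hy k hk, sub_zero]

end Fourier

theorem APA_step_inequality_general
    (n ϖ : ℕ) (hn : 1 ≤ n) (s : EuclideanSpace ℝ (Fin n))
    (a : EuclideanSpace ℝ (Fin n)) (ha : a ∈ Sband n ϖ)
    (m b : EuclideanSpace ℝ (Fin n))
    (hm : m = Pgeq n s a) (hb : b = Pband n ϖ (m - a)) (hbne : b ≠ 0)
    (lam : ℝ) (hlam : lam = ‖m - a‖ ^ 2 / ‖b‖ ^ 2)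
    (a' : EuclideanSpace ℝ (Fin n)) (ha' : a' = a + lam • b) :
    ∀ x ∈ Sgeq n s ∩ Sband n ϖ,
      ‖x - a'‖ ^ 2 + ‖a' - m‖ ^ 2 ≤ ‖x - m‖ ^ 2 := by
  rintro x ⟨hx_geq, hx_band⟩
  have hb_band : b ∈ Sband n ϖ := hb ▸ Pband_mem_Sband hn ϖ (m - a)
  have hbb : ⟪b, b⟫ = ⟪b, m - a⟫ := by
    have := inner_Pband_of_mem_Sband hn hb_band (m - a)
    rwa [← hb] at this
  have hxa : ⟪x - a, b⟫ = ⟪x - a, m - a⟫ := by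
    rw [hb]
    exact inner_Pband_of_mem_Sband hn (sub_mem_Sband hx_band ha) (m - a)
  have hxm : 0 ≤ ⟪x - m, m - a⟫ := hm ▸ inner_sub_Pgeq_sub_nonneg hx_geq a
  have hlam' : lam * ‖b‖ ^ 2 = ‖m - a‖ ^ 2 := by
    rw [hlam, div_mul_cancel₀ _ (by positivity)]
  rw [ha']
  exact norm_sub_sq_add_norm_sub_sq_le_of_extrapolation hxa hbb hxm hbne hlam'

/-- Fejér-type inequality for one AP-A step. -/
theorem APA_step_inequality
    (n ϖ : ℕ) (hn : 1 ≤ n) (hϖ : 1 ≤ ϖ) (s : EuclideanSpace ℝ (Fin n))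
    (a : EuclideanSpace ℝ (Fin n)) (ha : a ∈ Sband n ϖ)
    (m b : EuclideanSpace ℝ (Fin n))
    (hm : m = Pgeq n s a) (hb : b = Pband n ϖ (m - a)) (hbne : b ≠ 0)
    (lam : ℝ) (hlam : lam = ‖m - a‖ ^ 2 / ‖b‖ ^ 2)
    (a' : EuclideanSpace ℝ (Fin n)) (ha' : a' = a + lam • b) :
    ∀ x ∈ Sgeq n s ∩ Sband n ϖ,
      ‖x - a'‖ ^ 2 + ‖a' - m‖ ^ 2 ≤ ‖x - m‖ ^ 2 :=
  APA_step_inequality_general n ϖ hn s a ha m b hm hb hbne lam hlam a' ha'
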